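/- arXiv:1506.06051 — 16 statements merged into one kernel-verified Lean document; each statement's English description precedes it below -/
import Mathlib

section
/- For three lines a, b, c of L, the three conditions a ∈ Σ(b,c), b ∈ Σ(c,a), and c ∈ Σ(a,b) are equivalent (each condition implicitly asserting that the relevant pair consists of distinct incident lines). -/
/-!
Axiomatic projective space with lines as primary elements (Robinson,
"Projective space: lines and duality").

`perp I S` is `S^♢`, the set of lines incident to every line of `S`;
`lineSig I a b` is `Σ(a,b) = {a,b}^♢ \ {a,b}^♢♢`, the lines that belong to a
skew pair in `[a b]`.
-/

namespace PSLD

variable {L : Type*}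

/-- `S^♢`: the lines incident to every member of `S`. -/
def perp (I : L → L → Prop) (S : Set L) : Set L := {l | ∀ s ∈ S, I l s}

/-- `Σ(a,b) = {a,b}^♢ \ {a,b}^♢♢`. -/
def lineSig (I : L → L → Prop) (a b : L) : Set L :=
  perp I {a, b} \ perp I (perp I {a, b})

/-- A triad: pairwise incident distinct lines `a, b, c` with `c ∈ Σ(a,b)`. -/
def Triad (I : L → L → Prop) (a b c : L) : Prop :=
  a ≠ b ∧ I a b ∧ c ∈ lineSig I a b

/-- A nonempty type of lines with a reflexive symmetric incidence relation
satisfying AXIOM [1], AXIOM [2.1], AXIOM [2.2], AXIOM [2.3]. -/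
structure LineGeom (L : Type*) where
  /-- incidence -/
  I : L → L → Prop
  nonempty : Nonempty L
  refl : ∀ l, I l l
  symm : ∀ a b, I a b → I b a
  /-- AXIOM [1]: each `l^♢` contains a pairwise skew triple. -/
  ax1 : ∀ l : L, ∃ x y z : L, I x l ∧ I y l ∧ I z l ∧ ¬ I x y ∧ ¬ I y z ∧ ¬ I x z
  /-- AXIOM [2.1]: for distinct incident `a, b`, `[a b]` contains a skew pair. -/
  ax21 : ∀ a b : L, a ≠ b → I a b →
    ∃ x ∈ perp I {a, b}, ∃ y ∈ perp I {a, b}, ¬ I x y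
  /-- AXIOM [2.2]: for distinct incident `a, b` and `z ∈ Σ(a,b)`,
  `[a b z]` contains no skew pair. -/
  ax22 : ∀ a b z : L, a ≠ b → I a b → z ∈ lineSig I a b →
    ∀ x ∈ perp I {a, b, z}, ∀ y ∈ perp I {a, b, z}, I x y
  /-- AXIOM [2.3]: for distinct incident `a, b` and a skew pair `x, y ∈ [a b]`,
  every line of `[a b]` is incident to `x` or to `y`. -/
  ax23 : ∀ a b x y : L, a ≠ b → I a b → x ∈ perp I {a, b} → y ∈ perp I {a, b} →
    ¬ I x y → ∀ l ∈ perp I {a, b}, I l x ∨ I l y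

lemma mem_perp_pair {I : L → L → Prop} {l u v : L} (h1 : I l u) (h2 : I l v) :
    l ∈ perp I {u, v} := by
  intro s hs
  simp only [Set.mem_insert_iff, Set.mem_singleton_iff] at hs
  rcases hs with rfl | rfl <;> assumption

lemma mem_perp_triple {I : L → L → Prop} {l u v w : L}
    (h1 : I l u) (h2 : I l v) (h3 : I l w) : l ∈ perp I {u, v, w} := by
  intro s hs
  simp only [Set.mem_insert_iff, Set.mem_singleton_iff] at hs
  rcases hs with rfl | rfl | rfl <;> assumption

/-- Cyclic shift: `a ∈ Σ(b,c)` implies `b ∈ Σ(c,a)`. -/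
lemma triad_cycle (G : LineGeom L) {a b c : L}
    (h : b ≠ c ∧ G.I b c ∧ a ∈ lineSig G.I b c) :
    c ≠ a ∧ G.I c a ∧ b ∈ lineSig G.I c a := by
  obtain ⟨hbc, hIbc, haP, haN⟩ := h
  have hIab : G.I a b := haP b (by simp)
  have hIac : G.I a c := haP c (by simp)
  have hca : c ≠ a := fun e =>
    haN (fun s hs => G.symm _ _ (e ▸ hs c (by simp)))
  refine ⟨hca, G.symm _ _ hIac, mem_perp_pair hIbc (G.symm _ _ hIab), ?_⟩
  intro hb
  obtain ⟨x, hx, y, hy, hxy⟩ := G.ax21 c a hca (G.symm _ _ hIac)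
  have hx3 : x ∈ perp G.I {b, c, a} :=
    mem_perp_triple (G.symm _ _ (hb x hx)) (hx c (by simp)) (hx a (by simp))
  have hy3 : y ∈ perp G.I {b, c, a} :=
    mem_perp_triple (G.symm _ _ (hb y hy)) (hy c (by simp)) (hy a (by simp))
  exact hxy (G.ax22 b c a hbc hIbc ⟨haP, haN⟩ x hx3 y hy3)

/-- Theorem 1 (paper): for lines `a, b, c` the conditions `a ∈ Σ(b,c)`,
`b ∈ Σ(c,a)`, `c ∈ Σ(a,b)` are equivalent (each implicitly asserting that the
relevant pair is a pair of distinct incident lines). -/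
theorem sig_mem_tfae (G : LineGeom L) (a b c : L) :
    List.TFAE [b ≠ c ∧ G.I b c ∧ a ∈ lineSig G.I b c,
               c ≠ a ∧ G.I c a ∧ b ∈ lineSig G.I c a,
               a ≠ b ∧ G.I a b ∧ c ∈ lineSig G.I a b] := by
  tfae_have 1 → 2 := triad_cycle G
  tfae_have 2 → 3 := triad_cycle G
  tfae_have 3 → 1 := triad_cycle G
  tfae_finish

end PSLD
end

section
/- For any two distinct incident lines a, b, the incidence relation ♢ restricted to the set Σ(a,b) is an equivalence relation on Σ(a,b), and it has precisely two equivalence classes. -/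
/-!
Axiomatic projective space with lines as primary elements (Robinson,
"Projective space: lines and duality").

`perp I S` is `S^♢`, the set of lines incident to every line of `S`;
`lineSig I a b` is `Σ(a,b) = {a,b}^♢ \ {a,b}^♢♢`, the lines that belong to a
skew pair in `[a b]`.
-/

namespace PSLD

variable {L : Type*}

/-- Theorem 2 (paper): incidence restricts to `Σ(a,b)` as an equivalence
relation with precisely two equivalence classes. -/
theorem sig_incidence_equivalence_two_classes (G : LineGeom L) (a b : L)
    (hab : a ≠ b) (hI : G.I a b) :
    (∀ x ∈ lineSig G.I a b, G.I x x) ∧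
    (∀ x ∈ lineSig G.I a b, ∀ y ∈ lineSig G.I a b, G.I x y → G.I y x) ∧
    (∀ x ∈ lineSig G.I a b, ∀ y ∈ lineSig G.I a b, ∀ z ∈ lineSig G.I a b,
      G.I x y → G.I y z → G.I x z) ∧
    (∃ c ∈ lineSig G.I a b, ∃ d ∈ lineSig G.I a b, ¬ G.I c d ∧
      ∀ z ∈ lineSig G.I a b, (G.I z c ∧ ¬ G.I z d) ∨ (G.I z d ∧ ¬ G.I z c)) := by
  classical
  refine ⟨fun x _ => G.refl x, fun x _ y _ h => G.symm _ _ h, ?_, ?_⟩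
  · intro x hx y hy z hz hxy hyz
    have hxy' : x ∈ perp G.I {a, b, y} := by
      intro s hs
      simp only [Set.mem_insert_iff, Set.mem_singleton_iff] at hs
      rcases hs with rfl | rfl | rfl
      · exact hx.1 s (by simp)
      · exact hx.1 s (by simp)
      · exact hxy
    have hzy' : z ∈ perp G.I {a, b, y} := by
      intro s hs
      simp only [Set.mem_insert_iff, Set.mem_singleton_iff] at hs
      rcases hs with rfl | rfl | rfl
      · exact hz.1 s (by simp)
      · exact hz.1 s (by simp)
      · exact G.symm _ _ hyz
    exact G.ax22 a b y hab hI hy x hxy' z hzy'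
  · obtain ⟨c, hc, d, hd, hcd⟩ := G.ax21 a b hab hI
    have hcS : c ∈ lineSig G.I a b := ⟨hc, fun h => hcd (h d hd)⟩
    have hdS : d ∈ lineSig G.I a b := ⟨hd, fun h => hcd (G.symm _ _ (h c hc))⟩
    refine ⟨c, hcS, d, hdS, hcd, ?_⟩
    intro z hz
    have hone : G.I z c ∨ G.I z d := G.ax23 a b c d hab hI hc hd hcd z hz.1
    have hnotboth : ¬ (G.I z c ∧ G.I z d) := by
      rintro ⟨h1, h2⟩
      apply hcd
      have hc' : c ∈ perp G.I {a, b, z} := by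
        intro s hs
        simp only [Set.mem_insert_iff, Set.mem_singleton_iff] at hs
        rcases hs with rfl | rfl | rfl
        · exact hc s (by simp)
        · exact hc s (by simp)
        · exact G.symm _ _ h1
      have hd' : d ∈ perp G.I {a, b, z} := by
        intro s hs
        simp only [Set.mem_insert_iff, Set.mem_singleton_iff] at hs
        rcases hs with rfl | rfl | rfl
        · exact hd s (by simp)
        · exact hd s (by simp)
        · exact G.symm _ _ h2
      exact G.ax22 a b z hab hI hz c hc' d hd'
    rcases hone with h | h
    · exact Or.inl ⟨h, fun h' => hnotboth ⟨h, h'⟩⟩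
    · exact Or.inr ⟨h, fun h' => hnotboth ⟨h', h⟩⟩

end PSLD
end

section
/- Let a, b be distinct incident lines and let c', c'' ∈ Σ(a,b). If c' ♢ c'' then [a b c'] = [a b c'']. -/
/-!
Axiomatic projective space with lines as primary elements (Robinson,
"Projective space: lines and duality").

`perp I S` is `S^♢`, the set of lines incident to every line of `S`;
`lineSig I a b` is `Σ(a,b) = {a,b}^♢ \ {a,b}^♢♢`, the lines that belong to a
skew pair in `[a b]`.
-/

namespace PSLD

variable {L : Type*}

/-- Theorem 3 (paper): if `c', c'' ∈ Σ(a,b)` and `c' ♢ c''`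
then `[a b c'] = [a b c'']`. -/
theorem perp_triple_eq_of_incident (G : LineGeom L) (a b c' c'' : L)
    (hab : a ≠ b) (hI : G.I a b)
    (hc' : c' ∈ lineSig G.I a b) (hc'' : c'' ∈ lineSig G.I a b)
    (hcc : G.I c' c'') :
    perp G.I {a, b, c'} = perp G.I {a, b, c''} := by
  have mem3 : ∀ (x c : L), x ∈ perp G.I {a, b, c} ↔ G.I x a ∧ G.I x b ∧ G.I x c := by
    intro x c; simp [perp]
  have key : ∀ c d : L, c ∈ lineSig G.I a b → d ∈ lineSig G.I a b → G.I c d →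
      perp G.I {a, b, c} ⊆ perp G.I {a, b, d} := by
    intro c d hc hd hcd l hl
    have hdperp : d ∈ perp G.I {a, b, c} := by
      rw [mem3]
      exact ⟨hd.1 a (by simp), hd.1 b (by simp), G.symm c d hcd⟩
    have hld : G.I l d := G.ax22 a b c hab hI hc l hl d hdperp
    rw [mem3] at hl ⊢
    exact ⟨hl.1, hl.2.1, hld⟩
  exact Set.Subset.antisymm (key c' c'' hc' hc'' hcc) (key c'' c' hc'' hc' (G.symm _ _ hcc))

end PSLD
end

section
/- If a, b, c is a triad, then precisely one of the following two sets of three conditions holds: (Y) a ∈ Σ_Y(b,c), b ∈ Σ_Y(c,a), c ∈ Σ_Y(a,b); or (∇) a ∈ Σ_∇(b,c), b ∈ Σ_∇(c,a), c ∈ Σ_∇(a,b). Moreover within each alternative the three conditions hold simultaneously. -/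
/-!
Axiomatic projective space with lines as primary elements (Robinson,
"Projective space: lines and duality").

`perp I S` is `S^♢`, the set of lines incident to every line of `S`;
`lineSig I a b` is `Σ(a,b) = {a,b}^♢ \ {a,b}^♢♢`, the lines that belong to a
skew pair in `[a b]`.
-/

namespace PSLD

variable {L : Type*}

/-- A `LineGeom` together with a symmetric labelling `Σ_Y`, `Σ_∇` of the two
incidence classes of each `Σ(a,b)`, the derived points `pt a b = a Y b` and
planes `pl a b = a ∇ b`, and AXIOM [3], AXIOM [4]. -/
structure LabeledLineGeom (L : Type*) extends LineGeom L where
  /-- the incidence class `Σ_Y(a,b)` -/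
  SY : L → L → Set L
  /-- the incidence class `Σ_∇(a,b)` -/
  SD : L → L → Set L
  SY_symm : ∀ a b : L, SY a b = SY b a
  SD_symm : ∀ a b : L, SD a b = SD b a
  SY_union_SD : ∀ a b : L, a ≠ b → I a b → SY a b ∪ SD a b = lineSig I a b
  SY_disj_SD : ∀ a b : L, a ≠ b → I a b → SY a b ∩ SD a b = ∅
  SY_nonempty : ∀ a b : L, a ≠ b → I a b → (SY a b).Nonempty
  SD_nonempty : ∀ a b : L, a ≠ b → I a b → (SD a b).Nonempty
  SY_incident : ∀ a b : L, a ≠ b → I a b → ∀ x ∈ SY a b, ∀ y ∈ SY a b, I x y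
  SD_incident : ∀ a b : L, a ≠ b → I a b → ∀ x ∈ SD a b, ∀ y ∈ SD a b, I x y
  SY_skew_SD : ∀ a b : L, a ≠ b → I a b → ∀ x ∈ SY a b, ∀ y ∈ SD a b, ¬ I x y
  /-- the point `a Y b` -/
  pt : L → L → Set L
  /-- the plane `a ∇ b` -/
  pl : L → L → Set L
  /-- `a Y b = [a b c]` for any `c ∈ Σ_Y(a,b)` (well-defined). -/
  pt_spec : ∀ a b c : L, a ≠ b → I a b → c ∈ SY a b → pt a b = perp I {a, b, c}
  /-- `a ∇ b = [a b c]` for any `c ∈ Σ_∇(a,b)` (well-defined). -/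
  pl_spec : ∀ a b c : L, a ≠ b → I a b → c ∈ SD a b → pl a b = perp I {a, b, c}
  /-- AXIOM [3]: each triad admits a triad with disjoint perp. -/
  ax3 : ∀ a b c : L, Triad I a b c → ∃ p q r : L, Triad I p q r ∧
    perp I {a, b, c} ∩ perp I {p, q, r} = ∅
  /-- AXIOM [4]: any two points meet; any two planes meet. -/
  ax4 : ∀ a b p q : L, a ≠ b → I a b → p ≠ q → I p q →
    (pt a b ∩ pt p q).Nonempty ∧ (pl a b ∩ pl p q).Nonempty

/-- `P` is a point: `P = a Y b` for some distinct incident lines `a, b`. -/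
def IsPoint (G : LabeledLineGeom L) (P : Set L) : Prop :=
  ∃ a b : L, a ≠ b ∧ G.I a b ∧ P = G.pt a b

/-- `π` is a plane: `π = a ∇ b` for some distinct incident lines `a, b`. -/
def IsPlane (G : LabeledLineGeom L) (π : Set L) : Prop :=
  ∃ a b : L, a ≠ b ∧ G.I a b ∧ π = G.pl a b

lemma triple_perm (a b c : L) : ({b, c, a} : Set L) = {a, b, c} := by
  ext x; simp only [Set.mem_insert_iff, Set.mem_singleton_iff]; tauto

lemma mem_perp_pair_s3 {I : L → L → Prop} {l a b : L} :
    l ∈ perp I {a, b} ↔ I l a ∧ I l b := by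
  constructor
  · exact fun h => ⟨h a (by simp), h b (by simp)⟩
  · rintro ⟨h1, h2⟩ s hs
    rcases hs with h | h
    · rw [h]; exact h1
    · rw [Set.mem_singleton_iff] at h; rw [h]; exact h2

lemma mem_perp_triple_s3 {I : L → L → Prop} {l a b c : L} :
    l ∈ perp I {a, b, c} ↔ I l a ∧ I l b ∧ I l c := by
  constructor
  · exact fun h => ⟨h a (by simp), h b (by simp), h c (by simp)⟩
  · rintro ⟨h1, h2, h3⟩ s hs
    rcases hs with h | h | h
    · rw [h]; exact h1
    · rw [h]; exact h2
    · rw [Set.mem_singleton_iff] at h; rw [h]; exact h3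

lemma triad_rotate (G : LineGeom L) {a b c : L} (h : Triad G.I a b c) :
    Triad G.I b c a := by
  obtain ⟨hab, hIab, hcp, hcnp⟩ := id h
  obtain ⟨hIca, hIcb⟩ := mem_perp_pair_s3.mp hcp
  have hbpp : b ∈ perp G.I (perp G.I {a, b}) := fun x hx =>
    G.symm x b ((mem_perp_pair_s3.mp hx).2)
  have hbc : b ≠ c := fun hbc => hcnp (hbc ▸ hbpp)
  have hIbc : G.I b c := G.symm c b hIcb
  refine ⟨hbc, hIbc, mem_perp_pair_s3.mpr ⟨hIab, G.symm c a hIca⟩, ?_⟩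
  intro hann
  obtain ⟨x, hx, y, hy, hxy⟩ := G.ax21 b c hbc hIbc
  have hIax : G.I a x := hann x hx
  have hIay : G.I a y := hann y hy
  have hmem : ∀ z, z ∈ perp G.I {b, c} → G.I a z → z ∈ perp G.I {a, b, c} := by
    intro z hz hIaz
    obtain ⟨h1, h2⟩ := mem_perp_pair_s3.mp hz
    exact mem_perp_triple_s3.mpr ⟨G.symm a z hIaz, h1, h2⟩
  exact hxy (G.ax22 a b c hab hIab ⟨hcp, hcnp⟩ x (hmem x hx hIax) y (hmem y hy hIay))

/-- No mixed labelling: if `c ∈ Σ_Y(a,b)` then `a ∉ Σ_∇(b,c)`. -/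
lemma not_mixed (G : LabeledLineGeom L) {a b c : L} (h : Triad G.I a b c)
    (hY : c ∈ G.SY a b) (hD : a ∈ G.SD b c) : False := by
  obtain ⟨hab, hIab, -⟩ := id h
  obtain ⟨hbc, hIbc, -⟩ := triad_rotate G.toLineGeom h
  have hpt : G.pt a b = perp G.I {a, b, c} := G.pt_spec a b c hab hIab hY
  have hpl : G.pl b c = perp G.I {a, b, c} := by
    rw [G.pl_spec b c a hbc hIbc hD, triple_perm]
  obtain ⟨p, q, r, htr, hdisj⟩ := G.ax3 a b c h
  obtain ⟨hpq, hIpq, hr⟩ := htr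
  have hr' : r ∈ G.SY p q ∪ G.SD p q := (G.SY_union_SD p q hpq hIpq).symm ▸ hr
  rcases hr' with hrY | hrD
  · have hpt' : G.pt p q = perp G.I {p, q, r} := G.pt_spec p q r hpq hIpq hrY
    obtain ⟨x, hx⟩ := (G.ax4 a b p q hab hIab hpq hIpq).1
    rw [hpt, hpt'] at hx
    exact absurd hdisj (Set.Nonempty.ne_empty ⟨x, hx⟩)
  · have hpl' : G.pl p q = perp G.I {p, q, r} := G.pl_spec p q r hpq hIpq hrD
    obtain ⟨x, hx⟩ := (G.ax4 b c p q hbc hIbc hpq hIpq).2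
    rw [hpl, hpl'] at hx
    exact absurd hdisj (Set.Nonempty.ne_empty ⟨x, hx⟩)

/-- No mixed labelling: if `c ∈ Σ_∇(a,b)` then `a ∉ Σ_Y(b,c)`. -/
lemma not_mixed' (G : LabeledLineGeom L) {a b c : L} (h : Triad G.I a b c)
    (hD : c ∈ G.SD a b) (hY : a ∈ G.SY b c) : False := by
  obtain ⟨hab, hIab, -⟩ := id h
  obtain ⟨hbc, hIbc, -⟩ := triad_rotate G.toLineGeom h
  have hpl : G.pl a b = perp G.I {a, b, c} := G.pl_spec a b c hab hIab hD
  have hpt : G.pt b c = perp G.I {a, b, c} := by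
    rw [G.pt_spec b c a hbc hIbc hY, triple_perm]
  obtain ⟨p, q, r, htr, hdisj⟩ := G.ax3 a b c h
  obtain ⟨hpq, hIpq, hr⟩ := htr
  have hr' : r ∈ G.SY p q ∪ G.SD p q := (G.SY_union_SD p q hpq hIpq).symm ▸ hr
  rcases hr' with hrY | hrD
  · have hpt' : G.pt p q = perp G.I {p, q, r} := G.pt_spec p q r hpq hIpq hrY
    obtain ⟨x, hx⟩ := (G.ax4 b c p q hbc hIbc hpq hIpq).1
    rw [hpt, hpt'] at hx
    exact absurd hdisj (Set.Nonempty.ne_empty ⟨x, hx⟩)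
  · have hpl' : G.pl p q = perp G.I {p, q, r} := G.pl_spec p q r hpq hIpq hrD
    obtain ⟨x, hx⟩ := (G.ax4 a b p q hab hIab hpq hIpq).2
    rw [hpl, hpl'] at hx
    exact absurd hdisj (Set.Nonempty.ne_empty ⟨x, hx⟩)

lemma SY_step (G : LabeledLineGeom L) {a b c : L} (h : Triad G.I a b c)
    (hY : c ∈ G.SY a b) : a ∈ G.SY b c := by
  have h' := triad_rotate G.toLineGeom h
  obtain ⟨hbc, hIbc, ha⟩ := h'
  have : a ∈ G.SY b c ∪ G.SD b c := (G.SY_union_SD b c hbc hIbc).symm ▸ ha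
  rcases this with hx | hx
  · exact hx
  · exact absurd (not_mixed G h hY hx) id

lemma SD_step (G : LabeledLineGeom L) {a b c : L} (h : Triad G.I a b c)
    (hD : c ∈ G.SD a b) : a ∈ G.SD b c := by
  have h' := triad_rotate G.toLineGeom h
  obtain ⟨hbc, hIbc, ha⟩ := h'
  have : a ∈ G.SY b c ∪ G.SD b c := (G.SY_union_SD b c hbc hIbc).symm ▸ ha
  rcases this with hx | hx
  · exact absurd (not_mixed' G h hD hx) id
  · exact hx

/-- Theorem 4 (paper): for a triad `a, b, c` precisely one of the alternatives
(Y) `a ∈ Σ_Y(b,c)`, `b ∈ Σ_Y(c,a)`, `c ∈ Σ_Y(a,b)` or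
(∇) `a ∈ Σ_∇(b,c)`, `b ∈ Σ_∇(c,a)`, `c ∈ Σ_∇(a,b)` holds. -/
theorem triad_label_dichotomy (G : LabeledLineGeom L) (a b c : L)
    (h : Triad G.I a b c) :
    Xor' (a ∈ G.SY b c ∧ b ∈ G.SY c a ∧ c ∈ G.SY a b)
         (a ∈ G.SD b c ∧ b ∈ G.SD c a ∧ c ∈ G.SD a b) := by
  obtain ⟨hab, hIab, hc⟩ := id h
  have h1 : Triad G.I b c a := triad_rotate G.toLineGeom h
  obtain ⟨hbc, hIbc, -⟩ := id h1
  have hcY : c ∈ G.SY a b ∪ G.SD a b := (G.SY_union_SD a b hab hIab).symm ▸ hc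
  rcases hcY with hY | hD
  · have haY : a ∈ G.SY b c := SY_step G h hY
    have hbY : b ∈ G.SY c a := SY_step G h1 haY
    refine Or.inl ⟨⟨haY, hbY, hY⟩, fun ⟨haD, _, _⟩ => ?_⟩
    have := G.SY_disj_SD b c hbc hIbc
    exact absurd (Set.mem_inter haY haD) (this ▸ Set.notMem_empty a)
  · have haD : a ∈ G.SD b c := SD_step G h hD
    have hbD : b ∈ G.SD c a := SD_step G h1 haD
    refine Or.inr ⟨⟨haD, hbD, hD⟩, fun ⟨haY, _, _⟩ => ?_⟩
    have := G.SY_disj_SD b c hbc hIbc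
    exact absurd (Set.mem_inter haY haD) (this ▸ Set.notMem_empty a)

end PSLD
end

section
/- If a, b and p, q are pairs of distinct incident lines, then a ∇ b ≠ p Y q; that is, no plane equals a point. -/
/-!
Axiomatic projective space with lines as primary elements (Robinson,
"Projective space: lines and duality").

`perp I S` is `S^♢`, the set of lines incident to every line of `S`;
`lineSig I a b` is `Σ(a,b) = {a,b}^♢ \ {a,b}^♢♢`, the lines that belong to a
skew pair in `[a b]`.
-/

namespace PSLD

variable {L : Type*}

/-- Theorem 5 (paper): no plane equals a point: `a ∇ b ≠ p Y q`. -/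
theorem plane_ne_point (G : LabeledLineGeom L) (a b p q : L)
    (hab : a ≠ b) (h1 : G.I a b) (hpq : p ≠ q) (h2 : G.I p q) :
    G.pl a b ≠ G.pt p q := by
  intro heq
  obtain ⟨c, hc⟩ := G.SD_nonempty a b hab h1
  have hcSig : c ∈ lineSig G.I a b := by
    rw [← G.SY_union_SD a b hab h1]; exact Or.inr hc
  have hplc : G.pl a b = perp G.I {a, b, c} := G.pl_spec a b c hab h1 hc
  obtain ⟨p', q', r', ⟨hpq', hI', hr'⟩, hdisj⟩ := G.ax3 a b c ⟨hab, h1, hcSig⟩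
  have hr2 := hr'
  rw [← G.SY_union_SD p' q' hpq' hI'] at hr2
  rcases hr2 with hY | hD
  · have hpt' : G.pt p' q' = perp G.I {p', q', r'} := G.pt_spec p' q' r' hpq' hI' hY
    obtain ⟨x, hx1, hx2⟩ := (G.ax4 p q p' q' hpq h2 hpq' hI').1
    have : x ∈ perp G.I {a, b, c} ∩ perp G.I {p', q', r'} := by
      constructor
      · rw [← hplc, heq]; exact hx1
      · rw [← hpt']; exact hx2
    rw [hdisj] at this; exact this
  · have hpl' : G.pl p' q' = perp G.I {p', q', r'} := G.pl_spec p' q' r' hpq' hI' hD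
    obtain ⟨x, hx1, hx2⟩ := (G.ax4 a b p' q' hab h1 hpq' hI').2
    have : x ∈ perp G.I {a, b, c} ∩ perp G.I {p', q', r'} := by
      constructor
      · rw [← hplc]; exact hx1
      · rw [← hpl']; exact hx2
    rw [hdisj] at this; exact this

end PSLD
end

section
/- For every line l ∈ L, the double perpendicular of the singleton satisfies {l}^♢♢ = {l}; equivalently, for every line m ≠ l there exists a line l' with l' ♢ l and l' skew to m. -/
/-!
Axiomatic projective space with lines as primary elements (Robinson,
"Projective space: lines and duality").

`perp I S` is `S^♢`, the set of lines incident to every line of `S`;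
`lineSig I a b` is `Σ(a,b) = {a,b}^♢ \ {a,b}^♢♢`, the lines that belong to a
skew pair in `[a b]`.
-/

namespace PSLD

variable {L : Type*}

/-- Theorem 6 (paper): for every line `l`, `{l}^♢♢ = {l}`. -/
theorem perp_perp_singleton (G : LineGeom L) (l : L) :
    perp G.I (perp G.I {l}) = {l} := by
  ext m
  constructor
  · intro hm
    by_contra hne
    -- m is incident to every line incident to l
    have hml : ∀ s, G.I s l → G.I m s := by
      intro s hs
      exact hm s (by intro t ht; rw [Set.mem_singleton_iff] at ht; subst ht; exact hs)
    have hIml : G.I m l := hml l (G.refl l)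
    obtain ⟨x, y, z, hxl, hyl, hzl, hxy, hyz, hxz⟩ := G.ax1 l
    have hmemx : x ∈ perp G.I {l, m} := by
      intro t ht
      rcases ht with h | h
      · subst h; exact hxl
      · rw [Set.mem_singleton_iff] at h; subst h; exact G.symm _ _ (hml x hxl)
    have hmemy : y ∈ perp G.I {l, m} := by
      intro t ht
      rcases ht with h | h
      · subst h; exact hyl
      · rw [Set.mem_singleton_iff] at h; subst h; exact G.symm _ _ (hml y hyl)
    have hmemz : z ∈ perp G.I {l, m} := by
      intro t ht
      rcases ht with h | h
      · subst h; exact hzl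
      · rw [Set.mem_singleton_iff] at h; subst h; exact G.symm _ _ (hml z hzl)
    have hlm : l ≠ m := fun h => hne (by simp [h.symm])
    have := G.ax23 l m x y hlm (G.symm _ _ hIml) hmemx hmemy hxy z hmemz
    rcases this with h | h
    · exact hxz (G.symm _ _ h)
    · exact hyz (G.symm _ _ h)
  · intro hm
    rw [Set.mem_singleton_iff] at hm
    subst hm
    intro s hs
    exact G.symm _ _ (hs _ rfl)

end PSLD
end

section
/- Let u, v, w be three distinct pairwise skew lines. If m and n are distinct lines in [u v w], then m and n are skew. -/
/-!
Axiomatic projective space with lines as primary elements (Robinson,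
"Projective space: lines and duality").

`perp I S` is `S^♢`, the set of lines incident to every line of `S`;
`lineSig I a b` is `Σ(a,b) = {a,b}^♢ \ {a,b}^♢♢`, the lines that belong to a
skew pair in `[a b]`.
-/

namespace PSLD

variable {L : Type*}

/-- Theorem 7 (paper): if `u, v, w` are distinct pairwise skew lines and
`m ≠ n` lie in the regulus `[u v w]`, then `m` and `n` are skew. -/
theorem regulus_skew (G : LineGeom L) (u v w m n : L)
    (huv : u ≠ v) (hvw : v ≠ w) (huw : u ≠ w)
    (suv : ¬ G.I u v) (svw : ¬ G.I v w) (suw : ¬ G.I u w)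
    (hm : m ∈ perp G.I {u, v, w}) (hn : n ∈ perp G.I {u, v, w}) (hmn : m ≠ n) :
    ¬ G.I m n := by
  intro hImn
  -- basic incidences
  have hmu : G.I m u := hm u (by simp)
  have hmv : G.I m v := hm v (by simp)
  have hmw : G.I m w := hm w (by simp)
  have hnu : G.I n u := hn u (by simp)
  have hnv : G.I n v := hn v (by simp)
  have hnw : G.I n w := hn w (by simp)
  have memmn : ∀ l : L, G.I l m → G.I l n → l ∈ perp G.I {m, n} := by
    intro l h1 h2 s hs
    rcases hs with rfl | hs
    · exact h1
    · simpa using hs ▸ h2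
  have hu : u ∈ perp G.I {m, n} := memmn u (G.symm _ _ hmu) (G.symm _ _ hnu)
  have hv : v ∈ perp G.I {m, n} := memmn v (G.symm _ _ hmv) (G.symm _ _ hnv)
  have hw : w ∈ perp G.I {m, n} := memmn w (G.symm _ _ hmw) (G.symm _ _ hnw)
  -- skew pair in [m n]
  obtain ⟨x, hx, y, hy, hxy⟩ := G.ax21 m n hmn hImn
  -- x and y are in Σ(m,n)
  have hxSig : x ∈ lineSig G.I m n := by
    refine ⟨hx, fun h => hxy ?_⟩
    exact h y hy
  have hySig : y ∈ lineSig G.I m n := by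
    refine ⟨hy, fun h => hxy (G.symm _ _ ?_)⟩
    exact h x hx
  -- helper: membership of [m n z]
  have memmnz : ∀ z l : L, l ∈ perp G.I {m, n} → G.I l z → l ∈ perp G.I {m, n, z} := by
    intro z l hl hlz s hs
    rcases hs with rfl | rfl | hs
    · exact hl s (by simp)
    · exact hl s (by simp)
    · simpa using hs ▸ hlz
  -- if two of u,v,w are incident to the same member of the skew pair, contradiction
  have key : ∀ z : L, z ∈ lineSig G.I m n →
      ∀ a b : L, a ∈ perp G.I {m, n} → b ∈ perp G.I {m, n} →
      G.I a z → G.I b z → G.I a b := by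
    intro z hz a b ha hb haz hbz
    exact G.ax22 m n z hmn hImn hz a (memmnz z a ha haz) b (memmnz z b hb hbz)
  -- each of u, v, w is incident to x or y
  have cu := G.ax23 m n x y hmn hImn hx hy hxy u hu
  have cv := G.ax23 m n x y hmn hImn hx hy hxy v hv
  have cw := G.ax23 m n x y hmn hImn hx hy hxy w hw
  rcases cu with hux | huy <;> rcases cv with hvx | hvy <;> rcases cw with hwx | hwy
  · exact suv (key x hxSig u v hu hv hux hvx)
  · exact suv (key x hxSig u v hu hv hux hvx)
  · exact suw (key x hxSig u w hu hw hux hwx)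
  · exact svw (key y hySig v w hv hw hvy hwy)
  · exact svw (key x hxSig v w hv hw hvx hwx)
  · exact suw (key y hySig u w hu hw huy hwy)
  · exact suv (key y hySig u v hu hv huy hvy)
  · exact suv (key y hySig u v hu hv huy hvy)

end PSLD
end

section
/- If a, b, c is a triad, then [a b c]^♢ = [a b c]. -/
/-!
Axiomatic projective space with lines as primary elements (Robinson,
"Projective space: lines and duality").

`perp I S` is `S^♢`, the set of lines incident to every line of `S`;
`lineSig I a b` is `Σ(a,b) = {a,b}^♢ \ {a,b}^♢♢`, the lines that belong to a
skew pair in `[a b]`.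
-/

namespace PSLD

variable {L : Type*}

/-- Theorem 8 (paper): if `a, b, c` is a triad then `[a b c]^♢ = [a b c]`. -/
theorem perp_triad_self (G : LineGeom L) (a b c : L) (h : Triad G.I a b c) :
    perp G.I (perp G.I {a, b, c}) = perp G.I {a, b, c} := by
  obtain ⟨hab, hIab, hc⟩ := h
  have hcperp : c ∈ perp G.I {a, b} := hc.1
  have hIca : G.I c a := hcperp a (by simp)
  have hIcb : G.I c b := hcperp b (by simp)
  have ha : a ∈ perp G.I {a, b, c} := by
    intro t ht
    rcases ht with rfl | rfl | rfl
    exacts [G.refl _, hIab, G.symm _ _ hIca]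
  have hb : b ∈ perp G.I {a, b, c} := by
    intro t ht
    rcases ht with rfl | rfl | rfl
    exacts [G.symm _ _ hIab, G.refl _, G.symm _ _ hIcb]
  have hcc : c ∈ perp G.I {a, b, c} := by
    intro t ht
    rcases ht with rfl | rfl | rfl
    exacts [hIca, hIcb, G.refl _]
  ext m
  constructor
  · intro hm s hs
    rcases hs with rfl | rfl | rfl
    exacts [hm s ha, hm s hb, hm s hcc]
  · intro hm x hx
    exact G.ax22 a b c hab hIab hc m hm x hx

end PSLD
end

section
/- If a and b are two distinct incident lines, then (a Y b) ∩ (a ∇ b) = [a b]^♢. -/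
/-!
Axiomatic projective space with lines as primary elements (Robinson,
"Projective space: lines and duality").

`perp I S` is `S^♢`, the set of lines incident to every line of `S`;
`lineSig I a b` is `Σ(a,b) = {a,b}^♢ \ {a,b}^♢♢`, the lines that belong to a
skew pair in `[a b]`.
-/

namespace PSLD

variable {L : Type*}

/-- Theorem 9 (paper): for distinct incident `a, b`,
`(a Y b) ∩ (a ∇ b) = [a b]^♢`. -/
theorem point_inter_plane (G : LabeledLineGeom L) (a b : L)
    (hab : a ≠ b) (hI : G.I a b) :
    G.pt a b ∩ G.pl a b = perp G.I (perp G.I {a, b}) := by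

  obtain ⟨c, hc⟩ := G.SY_nonempty a b hab hI
  obtain ⟨d, hd⟩ := G.SD_nonempty a b hab hI
  have hcS : c ∈ lineSig G.I a b := (G.SY_union_SD a b hab hI) ▸ Or.inl hc
  have hdS : d ∈ lineSig G.I a b := (G.SY_union_SD a b hab hI) ▸ Or.inr hd
  have haP : a ∈ perp G.I {a, b} := by
    intro s hs
    rcases hs with h | h <;> subst h
    · exact G.refl _
    · exact hI
  have hbP : b ∈ perp G.I {a, b} := by
    intro s hs
    rcases hs with h | h <;> subst h
    · exact G.symm _ _ hI
    · exact G.refl _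
  ext l
  constructor
  · rintro ⟨hlpt, hlpl⟩
    have hlc : l ∈ perp G.I {a, b, c} := (G.pt_spec a b c hab hI hc) ▸ hlpt
    have hlab : l ∈ perp G.I {a, b} := by
      intro s hs
      exact hlc s (by rcases hs with h | h; exact Or.inl h; exact Or.inr (Or.inl h))
    intro m hm
    by_cases hmd : m ∈ perp G.I (perp G.I {a, b})
    · exact G.symm m l (hmd l hlab)
    · have hmS : m ∈ lineSig G.I a b := ⟨hm, hmd⟩
      rw [← G.SY_union_SD a b hab hI] at hmS
      rcases hmS with hmY | hmD
      · have := (G.pt_spec a b m hab hI hmY) ▸ hlpt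
        exact this m (Or.inr (Or.inr rfl))
      · have := (G.pl_spec a b m hab hI hmD) ▸ hlpl
        exact this m (Or.inr (Or.inr rfl))
  · intro hl
    constructor
    · rw [G.pt_spec a b c hab hI hc]
      rintro s (h | h | h) <;> subst h
      · exact hl _ haP
      · exact hl _ hbP
      · exact hl _ hcS.1
    · rw [G.pl_spec a b d hab hI hd]
      rintro s (h | h | h) <;> subst h
      · exact hl _ haP
      · exact hl _ hbP
      · exact hl _ hdS.1


end PSLD
end

section
/- If a and b are two distinct incident lines, then Σ_Y(a,b) = (a Y b) \ [a b]^♢ and Σ_∇(a,b) = (a ∇ b) \ [a b]^♢. -/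
/-!
Axiomatic projective space with lines as primary elements (Robinson,
"Projective space: lines and duality").

`perp I S` is `S^♢`, the set of lines incident to every line of `S`;
`lineSig I a b` is `Σ(a,b) = {a,b}^♢ \ {a,b}^♢♢`, the lines that belong to a
skew pair in `[a b]`.
-/

namespace PSLD

variable {L : Type*}

/-- Remark after Theorem 9 (paper): `Σ_Y(a,b) = (a Y b) \ [a b]^♢` and
`Σ_∇(a,b) = (a ∇ b) \ [a b]^♢`. -/
theorem sigY_sigD_as_diff (G : LabeledLineGeom L) (a b : L)
    (hab : a ≠ b) (hI : G.I a b) :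
    G.SY a b = G.pt a b \ perp G.I (perp G.I {a, b}) ∧
    G.SD a b = G.pl a b \ perp G.I (perp G.I {a, b}) := by
  obtain ⟨c, hc⟩ := G.SY_nonempty a b hab hI
  obtain ⟨d, hd⟩ := G.SD_nonempty a b hab hI
  have hcSig : c ∈ lineSig G.I a b := by
    rw [← G.SY_union_SD a b hab hI]; exact Or.inl hc
  have hdSig : d ∈ lineSig G.I a b := by
    rw [← G.SY_union_SD a b hab hI]; exact Or.inr hd
  constructor
  · rw [G.pt_spec a b c hab hI hc]
    ext z
    constructor
    · intro hz
      have hzSig : z ∈ lineSig G.I a b := by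
        rw [← G.SY_union_SD a b hab hI]; exact Or.inl hz
      refine ⟨?_, hzSig.2⟩
      intro s hs
      rcases hs with rfl | rfl | rfl
      · exact hzSig.1 s (Or.inl rfl)
      · exact hzSig.1 s (Or.inr rfl)
      · exact G.SY_incident a b hab hI z hz s hc
    · rintro ⟨hz1, hz2⟩
      have hzp : z ∈ perp G.I {a, b} := by
        intro s hs
        exact hz1 s (by rcases hs with rfl | rfl; exacts [Or.inl rfl, Or.inr (Or.inl rfl)])
      have hzSig : z ∈ lineSig G.I a b := ⟨hzp, hz2⟩
      rw [← G.SY_union_SD a b hab hI] at hzSig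
      rcases hzSig with h | h
      · exact h
      · exact absurd (hz1 c (Or.inr (Or.inr rfl)))
          (G.SY_skew_SD a b hab hI c hc z h ∘ G.symm z c)
  · rw [G.pl_spec a b d hab hI hd]
    ext z
    constructor
    · intro hz
      have hzSig : z ∈ lineSig G.I a b := by
        rw [← G.SY_union_SD a b hab hI]; exact Or.inr hz
      refine ⟨?_, hzSig.2⟩
      intro s hs
      rcases hs with rfl | rfl | rfl
      · exact hzSig.1 s (Or.inl rfl)
      · exact hzSig.1 s (Or.inr rfl)
      · exact G.SD_incident a b hab hI z hz s hd
    · rintro ⟨hz1, hz2⟩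
      have hzp : z ∈ perp G.I {a, b} := by
        intro s hs
        exact hz1 s (by rcases hs with rfl | rfl; exacts [Or.inl rfl, Or.inr (Or.inl rfl)])
      have hzSig : z ∈ lineSig G.I a b := ⟨hzp, hz2⟩
      rw [← G.SY_union_SD a b hab hI] at hzSig
      rcases hzSig with h | h
      · exact absurd (hz1 d (Or.inr (Or.inr rfl)))
          (G.SY_skew_SD a b hab hI z h d hd)
      · exact h

end PSLD
end

section
/- Let [a b c] = [p q r] for lines a, b, c, p, q, r. If a, b, c is a triad then p, q, r is a triad, and conversely. -/
/-!
Axiomatic projective space with lines as primary elements (Robinson,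
"Projective space: lines and duality").

`perp I S` is `S^♢`, the set of lines incident to every line of `S`;
`lineSig I a b` is `Σ(a,b) = {a,b}^♢ \ {a,b}^♢♢`, the lines that belong to a
skew pair in `[a b]`.
-/

namespace PSLD

variable {L : Type*}

lemma triad_transfer (G : LineGeom L) {a b c p q r : L}
    (h : perp G.I {a, b, c} = perp G.I {p, q, r}) (ht : Triad G.I a b c) :
    Triad G.I p q r := by
  obtain ⟨hab, hIab, hcmem, hcnot⟩ := ht
  have hIca : G.I c a := hcmem a (by simp)
  have hIcb : G.I c b := hcmem b (by simp)
  -- `S := [a b c]` is a clique by AX2.2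
  have clique : ∀ x ∈ perp G.I {a, b, c}, ∀ y ∈ perp G.I {a, b, c}, G.I x y :=
    G.ax22 a b c hab hIab ⟨hcmem, hcnot⟩
  -- a, b, c belong to S
  have haS : a ∈ perp G.I {a, b, c} := by
    intro s hs
    simp only [Set.mem_insert_iff, Set.mem_singleton_iff] at hs
    rcases hs with h1 | h1 | h1 <;> rw [h1]
    · exact G.refl a
    · exact hIab
    · exact G.symm _ _ hIca
  have hbS : b ∈ perp G.I {a, b, c} := by
    intro s hs
    simp only [Set.mem_insert_iff, Set.mem_singleton_iff] at hs
    rcases hs with h1 | h1 | h1 <;> rw [h1]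
    · exact G.symm _ _ hIab
    · exact G.refl b
    · exact G.symm _ _ hIcb
  have hcS : c ∈ perp G.I {a, b, c} := by
    intro s hs
    simp only [Set.mem_insert_iff, Set.mem_singleton_iff] at hs
    rcases hs with h1 | h1 | h1 <;> rw [h1]
    · exact hIca
    · exact hIcb
    · exact G.refl c
  -- a, b, c ∈ [p q r], so they are incident to p, q, r
  have haS' : a ∈ perp G.I {p, q, r} := h ▸ haS
  have hbS' : b ∈ perp G.I {p, q, r} := h ▸ hbS
  have hcS' : c ∈ perp G.I {p, q, r} := h ▸ hcS
  have hIap : G.I a p := haS' p (by simp)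
  have hIaq : G.I a q := haS' q (by simp)
  have hIar : G.I a r := haS' r (by simp)
  have hIbp : G.I b p := hbS' p (by simp)
  have hIbq : G.I b q := hbS' q (by simp)
  have hIbr : G.I b r := hbS' r (by simp)
  have hIcp : G.I c p := hcS' p (by simp)
  have hIcq : G.I c q := hcS' q (by simp)
  have hIcr : G.I c r := hcS' r (by simp)
  -- hence p, q, r ∈ S
  have hpS : p ∈ perp G.I {a, b, c} := by
    intro s hs
    simp only [Set.mem_insert_iff, Set.mem_singleton_iff] at hs
    rcases hs with h1 | h1 | h1 <;> rw [h1]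
    · exact G.symm _ _ hIap
    · exact G.symm _ _ hIbp
    · exact G.symm _ _ hIcp
  have hqS : q ∈ perp G.I {a, b, c} := by
    intro s hs
    simp only [Set.mem_insert_iff, Set.mem_singleton_iff] at hs
    rcases hs with h1 | h1 | h1 <;> rw [h1]
    · exact G.symm _ _ hIaq
    · exact G.symm _ _ hIbq
    · exact G.symm _ _ hIcq
  have hrS : r ∈ perp G.I {a, b, c} := by
    intro s hs
    simp only [Set.mem_insert_iff, Set.mem_singleton_iff] at hs
    rcases hs with h1 | h1 | h1 <;> rw [h1]
    · exact G.symm _ _ hIar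
    · exact G.symm _ _ hIbr
    · exact G.symm _ _ hIcr
  have hIpq : G.I p q := clique p hpS q hqS
  have hIpr : G.I p r := clique p hpS r hrS
  have hIqr : G.I q r := clique q hqS r hrS
  -- p ≠ q
  have hpq : p ≠ q := by
    rintro rfl
    by_cases hpr : p = r
    · subst hpr
      have hset : ({p, p, p} : Set L) = {p} := by simp
      obtain ⟨x, y, z, hx, hy, hz, hxy, _, _⟩ := G.ax1 p
      have hxS : x ∈ perp G.I {a, b, c} := by
        rw [h, hset]
        intro s hs
        simp only [Set.mem_singleton_iff] at hs
        subst hs; exact hx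
      have hyS : y ∈ perp G.I {a, b, c} := by
        rw [h, hset]
        intro s hs
        simp only [Set.mem_singleton_iff] at hs
        subst hs; exact hy
      exact hxy (clique x hxS y hyS)
    · have hset : ({p, p, r} : Set L) = {p, r} := by simp
      obtain ⟨x, hx, y, hy, hxy⟩ := G.ax21 p r hpr hIpr
      have hxS : x ∈ perp G.I {a, b, c} := by rw [h, hset]; exact hx
      have hyS : y ∈ perp G.I {a, b, c} := by rw [h, hset]; exact hy
      exact hxy (clique x hxS y hyS)
  refine ⟨hpq, hIpq, ?_, ?_⟩
  · -- r ∈ [p q]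
    intro s hs
    simp only [Set.mem_insert_iff, Set.mem_singleton_iff] at hs
    rcases hs with h1 | h1 <;> rw [h1]
    · exact G.symm _ _ hIpr
    · exact G.symm _ _ hIqr
  · -- r ∉ [p q]^♢♢, else [p q r] = [p q] contains a skew pair
    intro hr2
    have hsub : perp G.I {p, q} ⊆ perp G.I {p, q, r} := by
      intro l hl s hs
      simp only [Set.mem_insert_iff, Set.mem_singleton_iff] at hs
      rcases hs with h1 | h1 | h1 <;> rw [h1]
      · exact hl p (by simp)
      · exact hl q (by simp)
      · exact G.symm _ _ (hr2 l hl)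
    obtain ⟨x, hx, y, hy, hxy⟩ := G.ax21 p q hpq hIpq
    exact hxy (clique x (h.symm ▸ hsub hx) y (h.symm ▸ hsub hy))

/-- Theorem 10 (paper): if `[a b c] = [p q r]` then `a, b, c` is a triad iff
`p, q, r` is a triad. -/
theorem triad_of_perp_eq (G : LineGeom L) (a b c p q r : L)
    (h : perp G.I {a, b, c} = perp G.I {p, q, r}) :
    Triad G.I a b c ↔ Triad G.I p q r := by
  exact ⟨triad_transfer G h, triad_transfer G h.symm⟩

end PSLD
end

section
/- For lines a, b, c, p, q, r: the conditions p, q, r ∈ [a b c] and a, b, c ∈ [p q r] are equivalent; and when both a, b, c and p, q, r are triads, these conditions imply [a b c] = [p q r]. -/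
/-!
Axiomatic projective space with lines as primary elements (Robinson,
"Projective space: lines and duality").

`perp I S` is `S^♢`, the set of lines incident to every line of `S`;
`lineSig I a b` is `Σ(a,b) = {a,b}^♢ \ {a,b}^♢♢`, the lines that belong to a
skew pair in `[a b]`.
-/

namespace PSLD

variable {L : Type*}

/-- Theorem 11 (paper): `p, q, r ∈ [a b c]` iff `a, b, c ∈ [p q r]`; and when
both triples are triads these conditions imply `[a b c] = [p q r]`. -/
theorem perp_mem_symm_and_eq (G : LineGeom L) (a b c p q r : L) :
    (({p, q, r} : Set L) ⊆ perp G.I {a, b, c} ↔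
      ({a, b, c} : Set L) ⊆ perp G.I {p, q, r}) ∧
    (Triad G.I a b c → Triad G.I p q r →
      ({p, q, r} : Set L) ⊆ perp G.I {a, b, c} →
      perp G.I {a, b, c} = perp G.I {p, q, r}) := by
  have symm_sub : ∀ x y z u v w : L,
      ({u, v, w} : Set L) ⊆ perp G.I {x, y, z} →
      ({x, y, z} : Set L) ⊆ perp G.I {u, v, w} := by
    intro x y z u v w h t ht s hs
    exact G.symm _ _ (h hs t ht)
  constructor
  · exact ⟨symm_sub a b c p q r, symm_sub p q r a b c⟩
  · rintro ⟨hab, hIab, hc⟩ ⟨hpq, hIpq, hr⟩ hsub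
    have hsub' := symm_sub a b c p q r hsub
    ext l
    constructor
    · intro hl s hs
      have hsmem : s ∈ perp G.I {a, b, c} := hsub hs
      exact G.ax22 a b c hab hIab hc l hl s hsmem
    · intro hl s hs
      have hsmem : s ∈ perp G.I {p, q, r} := hsub' hs
      exact G.ax22 p q r hpq hIpq hr l hl s hsmem

end PSLD
end

section
/- Let a, b, c be a triad. If x, y ∈ [a b c] are distinct, then Σ(x,y) contains at least one of a, b, c (in particular x and y are incident, so Σ(x,y) is defined). -/
/-!
Axiomatic projective space with lines as primary elements (Robinson,
"Projective space: lines and duality").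

`perp I S` is `S^♢`, the set of lines incident to every line of `S`;
`lineSig I a b` is `Σ(a,b) = {a,b}^♢ \ {a,b}^♢♢`, the lines that belong to a
skew pair in `[a b]`.
-/

namespace PSLD

variable {L : Type*}

/-- Theorem 12 (paper), exchange: if `a, b, c` is a triad and `x ≠ y` lie in
`[a b c]`, then `x ♢ y` and `Σ(x,y)` contains at least one of `a, b, c`. -/
theorem exchange (G : LineGeom L) (a b c x y : L) (h : Triad G.I a b c)
    (hx : x ∈ perp G.I {a, b, c}) (hy : y ∈ perp G.I {a, b, c}) (hxy : x ≠ y) :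
    G.I x y ∧
      (a ∈ lineSig G.I x y ∨ b ∈ lineSig G.I x y ∨ c ∈ lineSig G.I x y) := by
  obtain ⟨hab, hIab, hc⟩ := h
  have hIxy : G.I x y := G.ax22 a b c hab hIab hc x hx y hy
  refine ⟨hIxy, ?_⟩
  have hxa : G.I x a := hx a (by simp)
  have hxb : G.I x b := hx b (by simp)
  have hxc : G.I x c := hx c (by simp)
  have hya : G.I y a := hy a (by simp)
  have hyb : G.I y b := hy b (by simp)
  have hyc : G.I y c := hy c (by simp)
  have hmem : ∀ t : L, G.I x t → G.I y t → t ∈ perp G.I {x, y} := by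
    intro t h1 h2 s hs
    rcases hs with rfl | rfl
    · exact G.symm _ _ h1
    · exact G.symm _ _ h2
  by_contra hcon
  push_neg at hcon
  obtain ⟨hna, hnb, hnc⟩ := hcon
  have dd : ∀ t : L, G.I x t → G.I y t → t ∉ lineSig G.I x y →
      t ∈ perp G.I (perp G.I {x, y}) := by
    intro t h1 h2 hn
    by_contra hd
    exact hn ⟨hmem t h1 h2, hd⟩
  have da := dd a hxa hya hna
  have db := dd b hxb hyb hnb
  have dc := dd c hxc hyc hnc
  obtain ⟨u, hu, v, hv, huv⟩ := G.ax21 x y hxy hIxy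
  have hu' : u ∈ perp G.I {a, b, c} := by
    intro s hs
    rcases hs with rfl | rfl | rfl
    · exact G.symm _ _ (da u hu)
    · exact G.symm _ _ (db u hu)
    · exact G.symm _ _ (dc u hu)
  have hv' : v ∈ perp G.I {a, b, c} := by
    intro s hs
    rcases hs with rfl | rfl | rfl
    · exact G.symm _ _ (da v hv)
    · exact G.symm _ _ (db v hv)
    · exact G.symm _ _ (dc v hv)
  exact huv (G.ax22 a b c hab hIab hc u hu' v hv')

end PSLD
end

section
/- Let a, b, c be a triad with [a b c] = a ∇ b. If x, y ∈ [a b c] are distinct, then Σ_∇(x,y) contains at least one of a, b, c. -/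
/-!
Axiomatic projective space with lines as primary elements (Robinson,
"Projective space: lines and duality").

`perp I S` is `S^♢`, the set of lines incident to every line of `S`;
`lineSig I a b` is `Σ(a,b) = {a,b}^♢ \ {a,b}^♢♢`, the lines that belong to a
skew pair in `[a b]`.
-/

namespace PSLD

variable {L : Type*}

/-- Refinement of the exchange theorem (paper): if `a, b, c` is a triad with
`[a b c] = a ∇ b` and `x ≠ y` lie in `[a b c]`, then `Σ_∇(x,y)` contains at
least one of `a, b, c`. -/
theorem exchange_refined (G : LabeledLineGeom L) (a b c x y : L)
    (h : Triad G.I a b c) (hplane : perp G.I {a, b, c} = G.pl a b)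
    (hx : x ∈ perp G.I {a, b, c}) (hy : y ∈ perp G.I {a, b, c}) (hxy : x ≠ y) :
    a ∈ G.SD x y ∨ b ∈ G.SD x y ∨ c ∈ G.SD x y := by
  by_contra hcon
  push_neg at hcon
  obtain ⟨hna, hnb, hnc⟩ := hcon
  obtain ⟨hab, hIab, hc⟩ := h
  have hxa : G.I x a := hx a (by simp)
  have hxb : G.I x b := hx b (by simp)
  have hxc : G.I x c := hx c (by simp)
  have hya : G.I y a := hy a (by simp)
  have hyb : G.I y b := hy b (by simp)
  have hyc : G.I y c := hy c (by simp)
  have hIxy : G.I x y := G.ax22 a b c hab hIab hc x hx y hy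
  obtain ⟨z, hz⟩ := G.SY_nonempty x y hxy hIxy
  -- key lemma: any line incident to x, y, z is incident to each of a, b, c
  have key : ∀ u : L, G.I x u → G.I y u → u ∉ G.SD x y →
      ∀ l : L, G.I l x → G.I l y → G.I l z → G.I l u := by
    intro u hxu hyu hu l hlx hly hlz
    have hup : u ∈ perp G.I {x, y} := by
      intro s hs
      simp only [Set.mem_insert_iff, Set.mem_singleton_iff] at hs
      rcases hs with rfl | rfl
      · exact G.symm _ _ hxu
      · exact G.symm _ _ hyu
    have hlp : l ∈ perp G.I {x, y} := by
      intro s hs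
      simp only [Set.mem_insert_iff, Set.mem_singleton_iff] at hs
      rcases hs with rfl | rfl
      · exact hlx
      · exact hly
    by_cases hupp : u ∈ perp G.I (perp G.I {x, y})
    · exact G.symm _ _ (hupp l hlp)
    · have huSY : u ∈ G.SY x y := by
        have h' : u ∈ lineSig G.I x y := ⟨hup, hupp⟩
        rw [← G.SY_union_SD x y hxy hIxy] at h'
        rcases h' with h' | h'
        · exact h'
        · exact absurd h' hu
      by_cases hlpp : l ∈ perp G.I (perp G.I {x, y})
      · exact hlpp u hup
      · have hlsig : l ∈ lineSig G.I x y := ⟨hlp, hlpp⟩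
        rw [← G.SY_union_SD x y hxy hIxy] at hlsig
        rcases hlsig with h' | h'
        · exact G.SY_incident x y hxy hIxy l h' u huSY
        · exact absurd (G.symm _ _ hlz) (G.SY_skew_SD x y hxy hIxy z hz l h')
  have hsub : perp G.I {x, y, z} ⊆ perp G.I {a, b, c} := by
    intro w hw
    have hwx : G.I w x := hw x (by simp)
    have hwy : G.I w y := hw y (by simp)
    have hwz : G.I w z := hw z (by simp)
    intro s hs
    simp only [Set.mem_insert_iff, Set.mem_singleton_iff] at hs
    rcases hs with rfl | rfl | rfl
    · exact key s hxa hya hna w hwx hwy hwz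
    · exact key s hxb hyb hnb w hwx hwy hwz
    · exact key s hxc hyc hnc w hwx hwy hwz
  obtain ⟨p, q, r, ⟨hpq, hIpq, hr⟩, hdisj⟩ := G.ax3 a b c ⟨hab, hIab, hc⟩
  have hr' : r ∈ G.SY p q ∨ r ∈ G.SD p q := by
    rw [← Set.mem_union, G.SY_union_SD p q hpq hIpq]; exact hr
  rcases hr' with hrY | hrD
  · obtain ⟨w, hw1, hw2⟩ := (G.ax4 x y p q hxy hIxy hpq hIpq).1
    rw [G.pt_spec x y z hxy hIxy hz] at hw1
    rw [G.pt_spec p q r hpq hIpq hrY] at hw2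
    have hmem : w ∈ perp G.I {a, b, c} ∩ perp G.I {p, q, r} := ⟨hsub hw1, hw2⟩
    rw [hdisj] at hmem
    exact hmem
  · obtain ⟨w, hw1, hw2⟩ := (G.ax4 a b p q hab hIab hpq hIpq).2
    rw [← hplane] at hw1
    rw [G.pl_spec p q r hpq hIpq hrD] at hw2
    have hmem : w ∈ perp G.I {a, b, c} ∩ perp G.I {p, q, r} := ⟨hw1, hw2⟩
    rw [hdisj] at hmem
    exact hmem

end PSLD
end

section
/- Let A, B, C be points with A ∩ B ∩ C = ∅ (not collinear), and write B ∩ C = {a}, C ∩ A = {b}, A ∩ B = {c}. Then a ∈ Σ_∇(b,c), b ∈ Σ_∇(c,a), c ∈ Σ_∇(a,b); the plane [a b c] is incident with each of A, B, C; and [a b c] is the unique plane incident with all of A, B, C. -/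
/-!
Axiomatic projective space with lines as primary elements (Robinson,
"Projective space: lines and duality").

`perp I S` is `S^♢`, the set of lines incident to every line of `S`;
`lineSig I a b` is `Σ(a,b) = {a,b}^♢ \ {a,b}^♢♢`, the lines that belong to a
skew pair in `[a b]`.
-/

namespace PSLD

variable {L : Type*}

/-! ### Auxiliary lemmas -/

lemma mem_perp2 {I : L → L → Prop} {a b x : L} :
    x ∈ perp I {a, b} ↔ I x a ∧ I x b := by
  simp [perp]

lemma mem_perp3 {I : L → L → Prop} {a b c x : L} :
    x ∈ perp I {a, b, c} ↔ I x a ∧ I x b ∧ I x c := by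
  simp [perp]

/-- A flat: `[p q x]` for distinct incident `p, q` and `x ∈ Σ(p,q)`. -/
def IsFlat (G : LabeledLineGeom L) (S : Set L) : Prop :=
  ∃ p q x : L, p ≠ q ∧ G.I p q ∧ x ∈ lineSig G.I p q ∧ S = perp G.I {p, q, x}

lemma SY_subset_sig (G : LabeledLineGeom L) {a b : L} (hne : a ≠ b) (hI : G.I a b) :
    G.SY a b ⊆ lineSig G.I a b := by
  rw [← G.SY_union_SD a b hne hI]; exact Set.subset_union_left

lemma SD_subset_sig (G : LabeledLineGeom L) {a b : L} (hne : a ≠ b) (hI : G.I a b) :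
    G.SD a b ⊆ lineSig G.I a b := by
  rw [← G.SY_union_SD a b hne hI]; exact Set.subset_union_right

lemma point_isFlat (G : LabeledLineGeom L) {P : Set L} (hP : IsPoint G P) : IsFlat G P := by
  obtain ⟨p, q, hne, hI, rfl⟩ := hP
  obtain ⟨x, hx⟩ := G.SY_nonempty p q hne hI
  exact ⟨p, q, x, hne, hI, SY_subset_sig G hne hI hx, G.pt_spec p q x hne hI hx⟩

lemma plane_isFlat (G : LabeledLineGeom L) {S : Set L} (hS : IsPlane G S) : IsFlat G S := by
  obtain ⟨p, q, hne, hI, rfl⟩ := hS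
  obtain ⟨x, hx⟩ := G.SD_nonempty p q hne hI
  exact ⟨p, q, x, hne, hI, SD_subset_sig G hne hI hx, G.pl_spec p q x hne hI hx⟩

lemma flat_pairwise (G : LabeledLineGeom L) {S : Set L} (hS : IsFlat G S) :
    ∀ x ∈ S, ∀ y ∈ S, G.I x y := by
  obtain ⟨p, q, z, hne, hI, hz, rfl⟩ := hS
  exact G.ax22 p q z hne hI hz

lemma flat_self_mem (G : LabeledLineGeom L) {p q z : L} (hI : G.I p q)
    (hz : z ∈ perp G.I {p, q}) :
    p ∈ perp G.I {p, q, z} ∧ q ∈ perp G.I {p, q, z} ∧ z ∈ perp G.I {p, q, z} := by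
  obtain ⟨hzp, hzq⟩ := mem_perp2.1 hz
  exact ⟨mem_perp3.2 ⟨G.refl p, hI, G.symm z p hzp⟩,
    mem_perp3.2 ⟨G.symm p q hI, G.refl q, G.symm z q hzq⟩,
    mem_perp3.2 ⟨hzp, hzq, G.refl z⟩⟩

lemma flat_rep (G : LabeledLineGeom L) {S : Set L} (hS : IsFlat G S) {l m : L}
    (hl : l ∈ S) (hm : m ∈ S) (hlm : l ≠ m) :
    ∃ w, w ∈ lineSig G.I l m ∧ w ∈ S ∧ S = perp G.I {l, m, w} := by
  have hpair := flat_pairwise G hS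
  have hIlm : G.I l m := hpair l hl m hm
  have hsub : S ⊆ perp G.I {l, m} := fun s hs =>
    mem_perp2.2 ⟨hpair s hs l hl, hpair s hs m hm⟩
  obtain ⟨p, q, z, hne, hI, hz, hSeq⟩ := hS
  obtain ⟨hpS, hqS, hzS⟩ :
      p ∈ S ∧ q ∈ S ∧ z ∈ S := by rw [hSeq]; exact flat_self_mem G hI hz.1
  by_cases hw : ∃ w ∈ S, w ∉ perp G.I (perp G.I {l, m})
  · obtain ⟨w, hwS, hw2⟩ := hw
    have hwsig : w ∈ lineSig G.I l m := ⟨hsub hwS, hw2⟩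
    refine ⟨w, hwsig, hwS, ?_⟩
    have hsub2 : S ⊆ perp G.I {l, m, w} := fun t ht =>
      mem_perp3.2 ⟨hpair t ht l hl, hpair t ht m hm, hpair t ht w hwS⟩
    have h22 := G.ax22 l m w hlm hIlm hwsig
    apply Set.Subset.antisymm hsub2
    intro s hs
    rw [hSeq]
    exact mem_perp3.2 ⟨h22 s hs p (hsub2 hpS), h22 s hs q (hsub2 hqS), h22 s hs z (hsub2 hzS)⟩
  · exfalso
    push_neg at hw
    obtain ⟨u, hu, v, hv, huv⟩ := G.ax21 l m hlm hIlm
    have huS : u ∈ S := by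
      rw [hSeq]
      exact mem_perp3.2 ⟨G.symm p u (hw p hpS u hu), G.symm q u (hw q hqS u hu),
        G.symm z u (hw z hzS u hu)⟩
    have hvS : v ∈ S := by
      rw [hSeq]
      exact mem_perp3.2 ⟨G.symm p v (hw p hpS v hv), G.symm q v (hw q hqS v hv),
        G.symm z v (hw z hzS v hv)⟩
    exact huv (hpair u huS v hvS)

lemma pt_ne_pl (G : LabeledLineGeom L) {a b l m : L} (hab : a ≠ b) (hIab : G.I a b)
    (hlm : l ≠ m) (hIlm : G.I l m) : G.pt a b ≠ G.pl l m := by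
  intro heq
  obtain ⟨c, hc⟩ := G.SY_nonempty a b hab hIab
  have hcsig := SY_subset_sig G hab hIab hc
  have hpt : G.pt a b = perp G.I {a, b, c} := G.pt_spec a b c hab hIab hc
  obtain ⟨p, q, r, ⟨hpq, hIpq, hr⟩, hdisj⟩ := G.ax3 a b c ⟨hab, hIab, hcsig⟩
  have hr' : r ∈ G.SY p q ∪ G.SD p q := by
    rw [G.SY_union_SD p q hpq hIpq]; exact hr
  rcases hr' with h | h
  · obtain ⟨s, hs1, hs2⟩ := (G.ax4 a b p q hab hIab hpq hIpq).1
    rw [hpt] at hs1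
    rw [G.pt_spec p q r hpq hIpq h] at hs2
    exact absurd (Set.mem_inter hs1 hs2) (by rw [hdisj]; exact Set.notMem_empty s)
  · obtain ⟨s, hs1, hs2⟩ := (G.ax4 l m p q hlm hIlm hpq hIpq).2
    rw [← heq, hpt] at hs1
    rw [G.pl_spec p q r hpq hIpq h] at hs2
    exact absurd (Set.mem_inter hs1 hs2) (by rw [hdisj]; exact Set.notMem_empty s)

lemma point_eq_pt (G : LabeledLineGeom L) {P : Set L} (hP : IsPoint G P) {l m : L}
    (hl : l ∈ P) (hm : m ∈ P) (hlm : l ≠ m) : P = G.pt l m := by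
  have hflat := point_isFlat G hP
  obtain ⟨w, hwsig, hwP, hrep⟩ := flat_rep G hflat hl hm hlm
  have hIlm : G.I l m := flat_pairwise G hflat l hl m hm
  have hw' : w ∈ G.SY l m ∪ G.SD l m := by
    rw [G.SY_union_SD l m hlm hIlm]; exact hwsig
  rcases hw' with h | h
  · rw [hrep, G.pt_spec l m w hlm hIlm h]
  · exfalso
    obtain ⟨p, q, hpq, hIpq, hPeq⟩ := hP
    exact pt_ne_pl G hpq hIpq hlm hIlm
      (by rw [← hPeq, hrep, G.pl_spec l m w hlm hIlm h])

lemma plane_eq_pl (G : LabeledLineGeom L) {π : Set L} (hπ : IsPlane G π) {l m : L}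
    (hl : l ∈ π) (hm : m ∈ π) (hlm : l ≠ m) : π = G.pl l m := by
  have hflat := plane_isFlat G hπ
  obtain ⟨w, hwsig, hwπ, hrep⟩ := flat_rep G hflat hl hm hlm
  have hIlm : G.I l m := flat_pairwise G hflat l hl m hm
  have hw' : w ∈ G.SY l m ∪ G.SD l m := by
    rw [G.SY_union_SD l m hlm hIlm]; exact hwsig
  rcases hw' with h | h
  · exfalso
    obtain ⟨p, q, hpq, hIpq, hπeq⟩ := hπ
    exact pt_ne_pl G hlm hIlm hpq hIpq
      (by rw [← hπeq, hrep, G.pt_spec l m w hlm hIlm h])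
  · rw [hrep, G.pl_spec l m w hlm hIlm h]

lemma third_SD (G : LabeledLineGeom L) {P : Set L} (hP : IsPoint G P) {l m z : L}
    (hl : l ∈ P) (hm : m ∈ P) (hlm : l ≠ m)
    (hzl : G.I z l) (hzm : G.I z m) (hz : z ∉ P) : z ∈ G.SD l m := by
  have hIlm : G.I l m := flat_pairwise G (point_isFlat G hP) l hl m hm
  obtain ⟨w, hw⟩ := G.SY_nonempty l m hlm hIlm
  have hPeq : P = perp G.I {l, m, w} := by
    rw [point_eq_pt G hP hl hm hlm]; exact G.pt_spec l m w hlm hIlm hw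
  have hwperp : w ∈ perp G.I {l, m} := (SY_subset_sig G hlm hIlm hw).1
  have hzsig : z ∈ lineSig G.I l m := by
    refine ⟨mem_perp2.2 ⟨hzl, hzm⟩, fun hcc => hz ?_⟩
    rw [hPeq]; exact mem_perp3.2 ⟨hzl, hzm, hcc w hwperp⟩
  have hz' : z ∈ G.SY l m ∪ G.SD l m := by
    rw [G.SY_union_SD l m hlm hIlm]; exact hzsig
  rcases hz' with h | h
  · exact absurd
      (by rw [hPeq];
          exact mem_perp3.2 ⟨hzl, hzm, G.SY_incident l m hlm hIlm z h w hw⟩) hz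
  · exact h

lemma common_mem_plane (G : LabeledLineGeom L) {π P Q : Set L} (hπ : IsPlane G π)
    (hP : IsPoint G P) (hQ : IsPoint G Q) (hPQ : P ≠ Q) {z : L}
    (hPQz : P ∩ Q = {z})
    (hPπ : (P ∩ π).Nonempty) (hQπ : (Q ∩ π).Nonempty) : z ∈ π := by
  have hzPQ : z ∈ P ∩ Q := by rw [hPQz]; rfl
  have hzP : z ∈ P := hzPQ.1
  have hzQ : z ∈ Q := hzPQ.2
  obtain ⟨lP, hlPP, hlPπ⟩ := hPπ
  obtain ⟨lQ, hlQQ, hlQπ⟩ := hQπ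
  by_cases he : lP = lQ
  · have hmem : lP ∈ P ∩ Q := ⟨hlPP, he ▸ hlQQ⟩
    rw [hPQz, Set.mem_singleton_iff] at hmem
    exact hmem ▸ hlPπ
  · have hπflat := plane_isFlat G hπ
    have hpair := flat_pairwise G hπflat
    have hIl : G.I lP lQ := hpair lP hlPπ lQ hlQπ
    obtain ⟨v, hv⟩ := G.SD_nonempty lP lQ he hIl
    have hπeq2 : π = perp G.I {lP, lQ, v} := by
      rw [plane_eq_pl G hπ hlPπ hlQπ he]; exact G.pl_spec lP lQ v he hIl hv
    have hIzP : G.I z lP := flat_pairwise G (point_isFlat G hP) z hzP lP hlPP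
    have hIzQ : G.I z lQ := flat_pairwise G (point_isFlat G hQ) z hzQ lQ hlQQ
    by_cases hcore : z ∈ perp G.I (perp G.I {lP, lQ})
    · rw [hπeq2]
      exact mem_perp3.2 ⟨hIzP, hIzQ, hcore v (SD_subset_sig G he hIl hv).1⟩
    · have hzsig : z ∈ lineSig G.I lP lQ := ⟨mem_perp2.2 ⟨hIzP, hIzQ⟩, hcore⟩
      have hz' : z ∈ G.SY lP lQ ∪ G.SD lP lQ := by
        rw [G.SY_union_SD lP lQ he hIl]; exact hzsig
      rcases hz' with h | h
      · by_cases hzlP : z = lP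
        · rw [hzlP]; exact hlPπ
        by_cases hzlQ : z = lQ
        · rw [hzlQ]; exact hlQπ
        exfalso
        have hptP : IsPoint G (G.pt lP lQ) := ⟨lP, lQ, he, hIl, rfl⟩
        have hspec := G.pt_spec lP lQ z he hIl h
        have hmemz : z ∈ G.pt lP lQ := by
          rw [hspec]; exact mem_perp3.2 ⟨hIzP, hIzQ, G.refl z⟩
        have hmemlP : lP ∈ G.pt lP lQ := by
          rw [hspec]; exact mem_perp3.2 ⟨G.refl lP, hIl, G.symm z lP hIzP⟩
        have hmemlQ : lQ ∈ G.pt lP lQ := by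
          rw [hspec]; exact mem_perp3.2 ⟨G.symm lP lQ hIl, G.refl lQ, G.symm z lQ hIzQ⟩
        have h1 : P = G.pt z lP := point_eq_pt G hP hzP hlPP hzlP
        have h2 : G.pt lP lQ = G.pt z lP := point_eq_pt G hptP hmemz hmemlP hzlP
        have h3 : Q = G.pt z lQ := point_eq_pt G hQ hzQ hlQQ hzlQ
        have h4 : G.pt lP lQ = G.pt z lQ := point_eq_pt G hptP hmemz hmemlQ hzlQ
        exact hPQ (by rw [h1, ← h2, h4, ← h3])
      · rw [hπeq2]
        exact mem_perp3.2 ⟨hIzP, hIzQ, G.SD_incident lP lQ he hIl z h v hv⟩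

/-- Theorem 16 (paper): if `A, B, C` are non-collinear points with
`B ∩ C = {a}`, `C ∩ A = {b}`, `A ∩ B = {c}`, then `a ∈ Σ_∇(b,c)`,
`b ∈ Σ_∇(c,a)`, `c ∈ Σ_∇(a,b)`; the plane `[a b c]` is incident with each of
`A, B, C`; and it is the unique plane incident with all three. -/
theorem triangle_plane (G : LabeledLineGeom L) (A B C : Set L) (a b c : L)
    (hA : IsPoint G A) (hB : IsPoint G B) (hC : IsPoint G C)
    (hnc : A ∩ B ∩ C = ∅)
    (ha : B ∩ C = {a}) (hb : C ∩ A = {b}) (hc : A ∩ B = {c}) :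
    a ∈ G.SD b c ∧ b ∈ G.SD c a ∧ c ∈ G.SD a b ∧
    IsPlane G (perp G.I {a, b, c}) ∧
    (A ∩ perp G.I {a, b, c}).Nonempty ∧
    (B ∩ perp G.I {a, b, c}).Nonempty ∧
    (C ∩ perp G.I {a, b, c}).Nonempty ∧
    (∀ π : Set L, IsPlane G π → (A ∩ π).Nonempty → (B ∩ π).Nonempty →
      (C ∩ π).Nonempty → π = perp G.I {a, b, c}) := by
  have hnm : ∀ x, x ∈ A → x ∈ B → x ∈ C → False := fun x h1 h2 h3 =>
    Set.notMem_empty x (hnc ▸ (⟨⟨h1, h2⟩, h3⟩ : x ∈ A ∩ B ∩ C))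
  have haBC : a ∈ B ∩ C := by rw [ha]; rfl
  have hbCA : b ∈ C ∩ A := by rw [hb]; rfl
  have hcAB : c ∈ A ∩ B := by rw [hc]; rfl
  have haB : a ∈ B := haBC.1
  have haC : a ∈ C := haBC.2
  have hbC : b ∈ C := hbCA.1
  have hbA : b ∈ A := hbCA.2
  have hcA : c ∈ A := hcAB.1
  have hcB : c ∈ B := hcAB.2
  have haA : a ∉ A := fun h => hnm a h haB haC
  have hbB : b ∉ B := fun h => hnm b hbA h hbC
  have hcC : c ∉ C := fun h => hnm c hcA hcB h
  have hab : a ≠ b := by rintro rfl; exact haA hbA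
  have hac : a ≠ c := by rintro rfl; exact haA hcA
  have hbc : b ≠ c := by rintro rfl; exact hbB hcB
  have hApair := flat_pairwise G (point_isFlat G hA)
  have hBpair := flat_pairwise G (point_isFlat G hB)
  have hCpair := flat_pairwise G (point_isFlat G hC)
  have hIab : G.I a b := hCpair a haC b hbC
  have hIac : G.I a c := hBpair a haB c hcB
  have hIbc : G.I b c := hApair b hbA c hcA
  have haSD : a ∈ G.SD b c := third_SD G hA hbA hcA hbc
    (G.symm b a (G.symm a b hIab)) hIac haA
  have hbSD : b ∈ G.SD c a := third_SD G hB hcB haB hac.symm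
    (G.symm c b (G.symm b c hIbc)) (G.symm a b hIab) hbB
  have hcSD : c ∈ G.SD a b := third_SD G hC haC hbC hab
    (G.symm a c hIac) (G.symm b c hIbc) hcC
  have hplane : G.pl a b = perp G.I {a, b, c} := G.pl_spec a b c hab hIab hcSD
  refine ⟨haSD, hbSD, hcSD, ⟨a, b, hab, hIab, hplane.symm⟩, ?_, ?_, ?_, ?_⟩
  · exact ⟨b, hbA, mem_perp3.2 ⟨G.symm a b hIab, G.refl b, hIbc⟩⟩
  · exact ⟨c, hcB, mem_perp3.2 ⟨G.symm a c hIac, G.symm b c hIbc, G.refl c⟩⟩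
  · exact ⟨a, haC, mem_perp3.2 ⟨G.refl a, hIab, hIac⟩⟩
  · intro π hπ h1 h2 h3
    have hAB : A ≠ B := fun h => haA (h ▸ haB)
    have hBC : B ≠ C := fun h => hbB (h.symm ▸ hbC)
    have hCA : C ≠ A := fun h => hcC (h.symm ▸ hcA)
    have hcπ : c ∈ π := common_mem_plane G hπ hA hB hAB hc h1 h2
    have hbπ : b ∈ π := common_mem_plane G hπ hC hA hCA hb h3 h1
    have haπ : a ∈ π := common_mem_plane G hπ hB hC hBC ha h2 h3
    rw [plane_eq_pl G hπ haπ hbπ hab]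
    exact hplane

end PSLD
end

section
/- For every line l ∈ L there exist three pairwise distinct points X, Y, Z each containing l (the Veblen–Young extension axiom E0: there are at least three points on every line). -/
/-!
Axiomatic projective space with lines as primary elements (Robinson,
"Projective space: lines and duality").

`perp I S` is `S^♢`, the set of lines incident to every line of `S`;
`lineSig I a b` is `Σ(a,b) = {a,b}^♢ \ {a,b}^♢♢`, the lines that belong to a
skew pair in `[a b]`.
-/

namespace PSLD

variable {L : Type*}

lemma pt_props (G : LabeledLineGeom L) (a b : L) (hab : a ≠ b) (h : G.I a b) :
    a ∈ G.pt a b ∧ b ∈ G.pt a b ∧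
      (∀ x ∈ G.pt a b, ∀ y ∈ G.pt a b, G.I x y) := by
  obtain ⟨c, hc⟩ := G.SY_nonempty a b hab h
  have hcs : c ∈ lineSig G.I a b := by
    rw [← G.SY_union_SD a b hab h]; exact Or.inl hc
  have hcp : c ∈ perp G.I {a, b} := hcs.1
  have hca : G.I c a := hcp a (by simp)
  have hcb : G.I c b := hcp b (by simp)
  have hspec := G.pt_spec a b c hab h hc
  rw [hspec]
  refine ⟨?_, ?_, ?_⟩
  · intro s hs
    rcases hs with rfl | rfl | rfl
    · exact G.refl _
    · exact h
    · exact G.symm _ _ hca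
  · intro s hs
    rcases hs with rfl | rfl | rfl
    · exact G.symm _ _ h
    · exact G.refl _
    · exact G.symm _ _ hcb
  · exact G.ax22 a b c hab h hcs

/-- Veblen–Young (E0): there are at least three points on every line. -/
theorem three_points_on_line (G : LabeledLineGeom L) (l : L) :
    ∃ X Y Z : Set L, IsPoint G X ∧ IsPoint G Y ∧ IsPoint G Z ∧
      X ≠ Y ∧ Y ≠ Z ∧ X ≠ Z ∧ l ∈ X ∧ l ∈ Y ∧ l ∈ Z := by
  obtain ⟨x, y, z, hxl, hyl, hzl, hxy, hyz, hxz⟩ := G.ax1 l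
  have hlx : l ≠ x := by rintro rfl; exact hxy (G.symm _ _ hyl)
  have hly : l ≠ y := by rintro rfl; exact hyz (G.symm _ _ hzl)
  have hlz : l ≠ z := by rintro rfl; exact hxz hxl
  obtain ⟨hlx1, hxx, hincx⟩ := pt_props G l x hlx (G.symm _ _ hxl)
  obtain ⟨hly1, hyy, hincy⟩ := pt_props G l y hly (G.symm _ _ hyl)
  obtain ⟨hlz1, hzz, hincz⟩ := pt_props G l z hlz (G.symm _ _ hzl)
  refine ⟨G.pt l x, G.pt l y, G.pt l z,
    ⟨l, x, hlx, G.symm _ _ hxl, rfl⟩,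
    ⟨l, y, hly, G.symm _ _ hyl, rfl⟩,
    ⟨l, z, hlz, G.symm _ _ hzl, rfl⟩, ?_, ?_, ?_, hlx1, hly1, hlz1⟩
  · intro he
    exact hxy (hincy x (he ▸ hxx) y hyy)
  · intro he
    exact hyz (hincz y (he ▸ hyy) z hzz)
  · intro he
    exact hxz (hincz x (he ▸ hxx) z hzz)

end PSLD
end
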